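/- Let X be a complete separable metric space with atomless Borel probability measure P_X, suppose Y contains a point y₀ with ℓ(f̃(x), y₀) > ε for all x in a set E of positive P_X-measure, and let A be any measurable algorithm mapping calibration datasets and inputs to {0,1} that is (ε, α)-conditionally PAC efficient for all distributions with X-marginal P_X. Then for P_X-almost every x ∈ E, P_{D∼P^n}(A(D,x) = 0) ≤ α. -/

import Mathlib

/-! Fix `x ∈ E` and an open set `U ∋ x`. Relabelling the expert as `y₀` on `U` gives a
measurable expert under which deferring at `x` is an error of size `> ε`, so PAC efficiency
bounds its deferral probability by `α`. The two sample distributions only differ when one of the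
`n` sample points lands in `U`, which costs at most `n · P_X(U)`. Running `U` through a countable
basis keeps the exceptional null sets countable, and atomlessness makes `P_X(U)` arbitrarily
small. -/

open MeasureTheory Filter Topology Metric

lemma measurePreserving_pi_graph {ι X Y : Type*} [Fintype ι] [MeasurableSpace X]
    [MeasurableSpace Y] (μ : Measure X) [IsFiniteMeasure μ] {g : X → Y} (hg : Measurable g) :
    MeasurePreserving (fun (ω : ι → X) i => (ω i, g (ω i)))
      (Measure.pi fun _ => μ) (Measure.pi fun _ => μ.map fun x => (x, g x)) :=
  measurePreserving_pi _ _ fun _ => ⟨measurable_id.prodMk hg, rfl⟩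

lemma measure_pi_map_graph_le_add {ι X Y : Type*} [Fintype ι] [MeasurableSpace X]
    [MeasurableSpace Y] (μ : Measure X) [IsProbabilityMeasure μ] {g g' : X → Y} (hg : Measurable g)
    (hg' : Measurable g') {B : Set X} (hB : MeasurableSet B) (hgg' : ∀ x ∉ B, g x = g' x)
    {S : Set (ι → X × Y)} (hS : MeasurableSet S) :
    Measure.pi (fun _ => μ.map fun x => (x, g x)) S ≤
      Measure.pi (fun _ => μ.map fun x => (x, g' x)) S + Fintype.card ι * μ B := by
  set G : (ι → X) → ι → X × Y := fun ω i => (ω i, g (ω i))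
  set G' : (ι → X) → ι → X × Y := fun ω i => (ω i, g' (ω i))
  have hsub : G ⁻¹' S ⊆ G' ⁻¹' S ∪ ⋃ i, Function.eval i ⁻¹' B := by
    intro ω hω
    by_cases hhit : ∃ i, ω i ∈ B
    · exact Or.inr (Set.mem_iUnion.2 hhit)
    · push Not at hhit
      have hGG' : G ω = G' ω := funext fun i => by simp only [G, G', hgg' _ (hhit i)]
      exact Or.inl (by simpa [Set.mem_preimage, hGG'] using hω)
  rw [← (measurePreserving_pi_graph μ hg).measure_preimage hS.nullMeasurableSet,
    ← (measurePreserving_pi_graph μ hg').measure_preimage hS.nullMeasurableSet]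
  calc Measure.pi (fun _ => μ) (G ⁻¹' S)
      ≤ Measure.pi (fun _ => μ) (G' ⁻¹' S ∪ ⋃ i, Function.eval i ⁻¹' B) := measure_mono hsub
    _ ≤ Measure.pi (fun _ => μ) (G' ⁻¹' S) +
          ∑ i, Measure.pi (fun _ => μ) (Function.eval i ⁻¹' B) :=
      (measure_union_le _ _).trans (by gcongr; exact measure_iUnion_fintype_le _ _)
    _ = Measure.pi (fun _ => μ) (G' ⁻¹' S) + Fintype.card ι * μ B := by
      simp only [fun i => (measurePreserving_eval (fun _ : ι => μ) i).measure_preimage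
        hB.nullMeasurableSet, Finset.sum_const, Finset.card_univ, nsmul_eq_mul]

lemma tendsto_measure_closedBall_zero {X : Type*} [MetricSpace X] [MeasurableSpace X]
    [OpensMeasurableSpace X] (μ : Measure X) [IsFiniteMeasure μ] [NullSingletonClass μ] (x : X) :
    Tendsto (fun r => μ (closedBall x r)) (𝓝[>] 0) (𝓝 0) := by
  have h := tendsto_measure_cthickening (μ := μ) (s := {x}) ⟨1, one_pos, measure_ne_top _ _⟩
  rw [closure_singleton, measure_singleton] at h
  refine (h.mono_left nhdsWithin_le_nhds).congr' ?_
  filter_upwards [self_mem_nhdsWithin] with r hr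
  rw [cthickening_singleton x (le_of_lt hr)]

open Classical in
lemma measure_deferral_le_add {ι X Y : Type*} [Fintype ι] [MeasurableSpace X]
    [MeasurableSpace Y] (μ : Measure X) [IsProbabilityMeasure μ] {A : (ι → X × Y) → X → Bool}
    {x : X} (hA : Measurable fun D => A D x) {ftil : X → Y} {ℓ : Y → Y → ℝ} {ε α : ℝ} {y₀ : Y}
    (hy₀ : ℓ (ftil x) y₀ > ε) {f : X → Y} (hf : Measurable f) {U : Set X}
    (hU : MeasurableSet U) (hxU : x ∈ U)
    (hPAC : (Measure.pi (fun _ : ι => μ.map fun x' => (x', U.piecewise (fun _ => y₀) f x'))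
      {D | (if A D x then (0 : ℝ) else ℓ (ftil x) (U.piecewise (fun _ => y₀) f x)) > ε}).toReal
        ≤ α) :
    (Measure.pi (fun _ : ι => μ.map fun x' => (x', f x')) {D | A D x = false}).toReal ≤
      α + Fintype.card ι * (μ U).toReal := by
  have hS : MeasurableSet {D | A D x = false} := hA (measurableSet_singleton false)
  have hdefer_err : {D | A D x = false} ⊆
      {D | (if A D x then (0 : ℝ) else ℓ (ftil x) (U.piecewise (fun _ => y₀) f x)) > ε} := by
    intro D (hD : A D x = false)
    simpa [hD, hxU] using hy₀
  set P' := Measure.pi fun _ : ι => μ.map fun x' => (x', U.piecewise (fun _ => y₀) f x')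
  have hswap := measure_pi_map_graph_le_add (g' := U.piecewise (fun _ => y₀) f) μ hf
    (Measurable.piecewise hU measurable_const hf) hU
    (fun x' hx' => (U.piecewise_eq_of_notMem _ _ hx').symm) hS
  calc _ ≤ (P' {D | A D x = false} + Fintype.card ι * μ U).toReal :=
        ENNReal.toReal_mono (by finiteness) hswap
    _ = (P' {D | A D x = false}).toReal + Fintype.card ι * (μ U).toReal := by
        rw [ENNReal.toReal_add (by finiteness) (by finiteness), ENNReal.toReal_mul,
          ENNReal.toReal_natCast]
    _ ≤ α + Fintype.card ι * (μ U).toReal := by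
        gcongr
        exact (ENNReal.toReal_mono (measure_ne_top _ _) (measure_mono hdefer_err)).trans hPAC

theorem stmt14_general {X Y : Type*} [MetricSpace X]
    [TopologicalSpace.SeparableSpace X] [MeasurableSpace X] [BorelSpace X]
    [MeasurableSpace Y]
    (PX : Measure X) [IsProbabilityMeasure PX] [NullSingletonClass PX]
    (ftil : X → Y) (ℓ : Y → Y → ℝ) (ε α : ℝ)
    (E : Set X)
    (y₀ : Y) (hy₀ : ∀ x ∈ E, ℓ (ftil x) y₀ > ε)
    (n : ℕ) (A : (Fin n → X × Y) → X → Bool)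
    (hA : Measurable fun p : (Fin n → X × Y) × X => A p.1 p.2)
    (f : X → Y) (hf : Measurable f)
    (hPAC : ∀ f' : X → Y, Measurable f' →
      ∀ᵐ x ∂PX,
        ((Measure.pi (fun _ : Fin n => PX.map (fun x' => (x', f' x'))))
          {D | (if A D x then (0 : ℝ) else ℓ (ftil x) (f' x)) > ε}).toReal ≤ α) :
    ∀ᵐ x ∂PX, x ∈ E →
      ((Measure.pi (fun _ : Fin n => PX.map (fun x' => (x', f x'))))
        {D | A D x = false}).toReal ≤ α := by
  classical
  obtain ⟨b, hb_countable, -, hb⟩ := TopologicalSpace.exists_countable_basis X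
  have hPAC_basis : ∀ᵐ x ∂PX, ∀ U ∈ b,
      ((Measure.pi fun _ : Fin n => PX.map fun x' => (x', U.piecewise (fun _ => y₀) f x'))
        {D | (if A D x then (0 : ℝ) else ℓ (ftil x) (U.piecewise (fun _ => y₀) f x)) > ε}).toReal
          ≤ α :=
    (ae_ball_iff hb_countable).2 fun U hU =>
      hPAC _ (Measurable.piecewise (hb.isOpen hU).measurableSet measurable_const hf)
  filter_upwards [hPAC_basis] with x hx hxE
  have hA_x : Measurable fun D => A D x := hA.comp (measurable_id.prodMk measurable_const)
  have hball : ∀ r > 0, ((Measure.pi (fun _ : Fin n => PX.map (fun x' => (x', f x'))))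
      {D | A D x = false}).toReal ≤ α + n * (PX (closedBall x r)).toReal := by
    intro r hr
    obtain ⟨U, hUb, hxU, hUr⟩ := hb.mem_nhds_iff.1 (closedBall_mem_nhds x hr)
    refine (measure_deferral_le_add PX hA_x (hy₀ x hxE) hf (hb.isOpen hUb).measurableSet hxU
      (hx U hUb)).trans ?_
    rw [Fintype.card_fin]
    gcongr
    exact measure_ne_top _ _
  have hlim : Tendsto (fun r => α + n * (PX (closedBall x r)).toReal) (𝓝[>] 0) (𝓝 α) := by
    simpa using ((ENNReal.tendsto_toReal ENNReal.zero_ne_top).comp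
      (tendsto_measure_closedBall_zero PX x)).const_mul (n : ℝ) |>.const_add α
  exact ge_of_tendsto hlim (eventually_nhdsWithin_of_forall hball)

/-- forward direction of the impossibility theorem: on a complete separable
metric space with atomless `P_X`, if there is `y₀` with `ℓ(f̃(x), y₀) > ε` on a set `E` of
positive measure, and the routing algorithm `A` is `(ε, α)`-conditionally PAC efficient for
all distributions with `X`-marginal `P_X` (in the paper's framework a distribution on
`X × Y` with marginal `P_X` is given by an expert function `f'`, labels `y = f'(x)`), then
for `P_X`-a.e. `x ∈ E` the deferral probability `P_{D∼Pⁿ}(A(D,x)=0)` is at most `α`,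
where `P` is the data distribution induced by the (fixed) expert `f`. -/
theorem stmt14 {X Y : Type*} [MetricSpace X] [CompleteSpace X]
    [TopologicalSpace.SeparableSpace X] [MeasurableSpace X] [BorelSpace X]
    [MeasurableSpace Y]
    (PX : Measure X) [IsProbabilityMeasure PX] [NullSingletonClass PX]
    (ftil : X → Y) (ℓ : Y → Y → ℝ) (hℓ : ∀ y y', 0 ≤ ℓ y y') (ε α : ℝ) (hε : 0 ≤ ε)
    (E : Set X) (hE : MeasurableSet E) (hEpos : 0 < PX E)
    (y₀ : Y) (hy₀ : ∀ x ∈ E, ℓ (ftil x) y₀ > ε)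
    (n : ℕ) (A : (Fin n → X × Y) → X → Bool)
    (hA : Measurable fun p : (Fin n → X × Y) × X => A p.1 p.2)
    (f : X → Y) (hf : Measurable f)
    (hPAC : ∀ f' : X → Y, Measurable f' →
      ∀ᵐ x ∂PX,
        ((Measure.pi (fun _ : Fin n => PX.map (fun x' => (x', f' x'))))
          {D | (if A D x then (0 : ℝ) else ℓ (ftil x) (f' x)) > ε}).toReal ≤ α) :
    ∀ᵐ x ∂PX, x ∈ E →
      ((Measure.pi (fun _ : Fin n => PX.map (fun x' => (x', f x'))))
        {D | A D x = false}).toReal ≤ α :=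
  stmt14_general PX ftil ℓ ε α E y₀ hy₀ n A hA f hf hPAC
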